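/- arXiv:2104.13838 — 3 statements merged into one kernel-verified Lean document; each statement's English description precedes it below -/
import Mathlib

section
/- Let V be a finite-dimensional real vector space of dimension m ≥ 1, and let Γ be an irreducible subgroup of GL(V), i.e. a subgroup for which the only Γ-invariant linear subspaces of V are {0} and V. Let v ∈ V and α ∈ V* (the dual space) be nonzero vectors with the property that α(g v) ∈ ℤ for every g ∈ Γ. Then the ℤ-submodule L of V generated by the orbit Γ·v = {g v : g ∈ Γ} is a free ℤ-module of rank m; equivalently, L is a discrete additive subgroup of V whose real span is all of V (a full ℤ-lattice in V). -/
/-!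
The real span of the orbit `Γ v` and the common kernel of the functionals `α ∘ g` (`g ∈ Γ`) are
both `Γ`-invariant, so irreducibility makes the first all of `V` and the second zero; hence the
`α ∘ g` span `V*`. Finitely many of them, `f₁, …, fₖ`, already span `V*`, and they take integer
values on `L`, so `{x ∈ L | |fᵢ x| < 1 for all i} = {0}` and `L` is discrete. A discrete subgroup
spanning `V` is a full lattice, free of rank `dim V`.
-/

open Module Submodule

section Irreducible

variable {K V : Type*} [Field K] [AddCommGroup V] [Module K V] {Γ : Subgroup (V ≃ₗ[K] V)}

theorem span_orbit_eq_top
    (hirr : ∀ W : Submodule K V, (∀ g ∈ Γ, ∀ x ∈ W, g x ∈ W) → W = ⊥ ∨ W = ⊤)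
    {v : V} (hv : v ≠ 0) : span K ((fun g : V ≃ₗ[K] V => g v) '' Γ) = ⊤ := by
  refine (hirr _ fun g hg x hx => ?_).resolve_left fun h =>
    hv <| (mem_bot K).mp <| h ▸ subset_span ⟨1, Γ.one_mem, rfl⟩
  refine span_mono ?_ (apply_mem_span_image_of_mem_span (g : V →ₗ[K] V) hx)
  rintro _ ⟨_, ⟨h, hh, rfl⟩, rfl⟩
  exact ⟨g * h, Γ.mul_mem hg hh, rfl⟩

theorem span_dual_orbit_eq_top [FiniteDimensional K V]
    (hirr : ∀ W : Submodule K V, (∀ g ∈ Γ, ∀ x ∈ W, g x ∈ W) → W = ⊥ ∨ W = ⊤)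
    {α : Dual K V} (hα : α ≠ 0) :
    span K ((fun g : V ≃ₗ[K] V => α ∘ₗ (g : V →ₗ[K] V)) '' Γ) = ⊤ := by
  set S := span K ((fun g : V ≃ₗ[K] V => α ∘ₗ (g : V →ₗ[K] V)) '' Γ)
  have hmem (x : V) : x ∈ S.dualCoannihilator ↔ ∀ g ∈ Γ, α (g x) = 0 := by
    rw [← SetLike.mem_coe, coe_dualCoannihilator_span]
    simp
  have hco : S.dualCoannihilator = ⊥ := by
    refine (hirr _ fun g hg x hx => ?_).resolve_right fun h => hα ?_
    · exact (hmem _).mpr fun h hh => (hmem x).mp hx (h * g) (Γ.mul_mem hh hg)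
    · ext x
      simpa using (hmem x).mp (h ▸ mem_top) 1 Γ.one_mem
  rw [← Subspace.dualCoannihilator_dualAnnihilator_eq (W := S), hco, dualAnnihilator_bot]

theorem exists_intCast_eq_apply_of_mem_span_orbit {v : V} {α : Dual K V}
    (hint : ∀ g ∈ Γ, ∃ k : ℤ, α (g v) = k) {g : V ≃ₗ[K] V} (hg : g ∈ Γ) {x : V}
    (hx : x ∈ span ℤ ((fun g : V ≃ₗ[K] V => g v) '' Γ)) : ∃ k : ℤ, α (g x) = k := by
  induction hx using span_induction with
  | mem _ hy =>
    obtain ⟨h, hh, rfl⟩ := hy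
    exact hint (g * h) (Γ.mul_mem hg hh)
  | zero => exact ⟨0, by simp⟩
  | add y z _ _ hy hz =>
    obtain ⟨k, hk⟩ := hy
    obtain ⟨l, hl⟩ := hz
    exact ⟨k + l, by simp [hk, hl]⟩
  | smul n y _ hy =>
    obtain ⟨k, hk⟩ := hy
    exact ⟨n * k, by simp [hk]⟩

end Irreducible

theorem discreteTopology_of_span_eq_top_of_exists_intCast_eq {E : Type*} [NormedAddCommGroup E]
    [NormedSpace ℝ E] [FiniteDimensional ℝ E] (L : Submodule ℤ E) {s : Set (Dual ℝ E)}
    (hs : span ℝ s = ⊤) (hL : ∀ f ∈ s, ∀ x ∈ L, ∃ k : ℤ, f x = k) : DiscreteTopology L := by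
  obtain ⟨t, hts, -, ht, -⟩ := exists_finset_span_eq_linearIndepOn ℝ s
  rw [hs] at ht
  have hzero : ({0} : Set L) = Subtype.val ⁻¹' ⋂ f ∈ t, f ⁻¹' Metric.ball 0 1 := by
    ext ⟨x, hx⟩
    simp only [Set.mem_singleton_iff, Set.mem_preimage, Set.mem_iInter, Metric.mem_ball,
      dist_zero_right, Real.norm_eq_abs]
    refine ⟨fun h f _ => by simp [(AddSubmonoid.mk_eq_zero _).mp h], fun h => Subtype.ext ?_⟩
    have hx0 : x ∈ (span ℝ (t : Set (Dual ℝ E))).dualCoannihilator := by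
      rw [← SetLike.mem_coe, coe_dualCoannihilator_span]
      intro f hf
      obtain ⟨k, hk⟩ := hL f (hts hf) x hx
      have hk1 := h f hf
      rw [hk, ← Int.cast_abs, ← Int.cast_one, Int.cast_lt, Int.abs_lt_one_iff] at hk1
      simp [hk, hk1]
    simpa [ht] using hx0
  refine discreteTopology_of_isOpen_singleton_zero (hzero ▸ ?_)
  exact continuous_subtype_val.isOpen_preimage _ <| isOpen_biInter_finset fun f _ =>
    f.continuous_of_finiteDimensional.isOpen_preimage _ Metric.isOpen_ball

theorem stmt_0_general {V : Type*} [NormedAddCommGroup V] [NormedSpace ℝ V]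
    [FiniteDimensional ℝ V] (m : ℕ)
    (hdim : Module.finrank ℝ V = m)
    (Γ : Subgroup (V ≃ₗ[ℝ] V))
    (hirr : ∀ W : Submodule ℝ V, (∀ g ∈ Γ, ∀ x ∈ W, g x ∈ W) → W = ⊥ ∨ W = ⊤)
    (v : V) (hv : v ≠ 0)
    (α : V →ₗ[ℝ] ℝ) (hα : α ≠ 0)
    (hint : ∀ g ∈ Γ, ∃ k : ℤ, α (g v) = (k : ℝ))
    (L : Submodule ℤ V)
    (hL : L = Submodule.span ℤ ((fun g : V ≃ₗ[ℝ] V => g v) '' (Γ : Set (V ≃ₗ[ℝ] V)))) :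
    Nonempty (Module.Basis (Fin m) ℤ L) ∧ DiscreteTopology L ∧
      Submodule.span ℝ (L : Set V) = ⊤ := by
  have hspan : span ℝ (L : Set V) = ⊤ := by
    rw [hL, span_span_of_tower]
    exact span_orbit_eq_top hirr hv
  have hdisc : DiscreteTopology L := by
    refine discreteTopology_of_span_eq_top_of_exists_intCast_eq L
      (span_dual_orbit_eq_top hirr hα) ?_
    rintro _ ⟨g, hg, rfl⟩ x hx
    exact exists_intCast_eq_apply_of_mem_span_orbit hint hg (hL ▸ hx)
  have : IsZLattice ℝ L := ⟨hspan⟩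
  exact ⟨⟨finBasisOfFinrankEq ℤ L ((ZLattice.rank ℝ L).trans hdim)⟩, hdisc, hspan⟩

/-- If `Γ ≤ GL(V)` is irreducible on the finite-dimensional real vector
space `V` of dimension `m ≥ 1`, `v ∈ V` and `α ∈ V*` are nonzero with `α (g v) ∈ ℤ`
for every `g ∈ Γ`, then the ℤ-submodule `L` generated by the orbit `Γ · v` is a
free ℤ-module of rank `m`; equivalently, `L` is a discrete additive subgroup of `V`
whose real span is all of `V`. -/
theorem stmt_0 {V : Type*} [NormedAddCommGroup V] [NormedSpace ℝ V]
    [FiniteDimensional ℝ V] (m : ℕ) (hm : 1 ≤ m)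
    (hdim : Module.finrank ℝ V = m)
    (Γ : Subgroup (V ≃ₗ[ℝ] V))
    (hirr : ∀ W : Submodule ℝ V, (∀ g ∈ Γ, ∀ x ∈ W, g x ∈ W) → W = ⊥ ∨ W = ⊤)
    (v : V) (hv : v ≠ 0)
    (α : V →ₗ[ℝ] ℝ) (hα : α ≠ 0)
    (hint : ∀ g ∈ Γ, ∃ k : ℤ, α (g v) = (k : ℝ))
    (L : Submodule ℤ V)
    (hL : L = Submodule.span ℤ ((fun g : V ≃ₗ[ℝ] V => g v) '' (Γ : Set (V ≃ₗ[ℝ] V)))) :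
    Nonempty (Module.Basis (Fin m) ℤ L) ∧ DiscreteTopology L ∧
      Submodule.span ℝ (L : Set V) = ⊤ :=
  stmt_0_general m hdim Γ hirr v hv α hα hint L hL
end

section
/- Let V be a finite-dimensional real vector space, Γ ≤ GL(V) an irreducible subgroup (the only Γ-invariant linear subspaces are {0} and V), and let α ∈ V* be a nonzero linear functional. If L is an additive subgroup of V that is invariant under Γ (g(L) ⊆ L for all g ∈ Γ) and satisfies α(L) ⊆ ℤ, then L is a discrete subgroup of V (the subspace topology on L is discrete). -/
/-!
The kernels of the functionals `α ∘ g`, `g ∈ Γ`, intersect in a `Γ`-invariant subspace which is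
not all of `V`, hence in `{0}`; since descending chains of subspaces stabilise, finitely many
`g₁, …, gₙ` already suffice. The integer-valued continuous functionals `α ∘ gᵢ` then separate the
points of `L`, so the neighbourhood `{v | ∀ i, |α (gᵢ v)| < 1}` of `0` meets `L` only in `0`.
-/

theorem exists_finset_biInf_eq_iInf {α ι : Type*} [CompleteLattice α] [WellFoundedLT α]
    (f : ι → α) : ∃ s : Finset ι, ⨅ i ∈ s, f i = ⨅ i, f i := by
  classical
  obtain ⟨_, ⟨s, rfl⟩, hmin⟩ :=
    wellFounded_lt.has_min (Set.range fun s : Finset ι => ⨅ i ∈ s, f i) ⟨_, ∅, rfl⟩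
  refine ⟨s, le_antisymm (le_iInf fun i => ?_) (le_iInf₂ fun i _ => iInf_le f i)⟩
  have hle : ⨅ j ∈ insert i s, f j ≤ ⨅ j ∈ s, f j :=
    biInf_mono fun j => Finset.mem_insert_of_mem
  have heq := (eq_of_le_of_not_lt hle (hmin _ ⟨_, rfl⟩)).symm
  exact heq ▸ biInf_le f (Finset.mem_insert_self i s)

theorem AddSubgroup.discreteTopology_of_int_valued {V ι : Type*} [AddCommGroup V]
    [TopologicalSpace V] [IsTopologicalAddGroup V] [Finite ι]
    (L : AddSubgroup V) (f : ι → V →+ ℝ) (hf : ∀ i, Continuous (f i))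
    (hint : ∀ i, ∀ x ∈ L, ∃ k : ℤ, f i x = k) (hsep : ∀ x ∈ L, (∀ i, f i x = 0) → x = 0) :
    DiscreteTopology L := by
  rw [discreteTopology_iff_isOpen_singleton_zero]
  refine ⟨⋂ i, f i ⁻¹' Set.Ioo (-1) 1,
    isOpen_iInter_of_finite fun i => isOpen_Ioo.preimage (hf i), Set.ext fun ⟨x, hx⟩ => ?_⟩
  simp only [Set.mem_preimage, Set.mem_iInter, Set.mem_Ioo, Set.mem_singleton_iff]
  refine ⟨fun hsmall => Subtype.ext (hsep x hx fun i => ?_), fun h0 i => ?_⟩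
  · obtain ⟨k, hk⟩ := hint i x hx
    obtain ⟨hlo, hhi⟩ := hk ▸ hsmall i
    have : k = 0 := by
      have : -1 < k := by exact_mod_cast hlo
      have : k < 1 := by exact_mod_cast hhi
      omega
    simp [hk, this]
  · obtain rfl : x = 0 := congrArg Subtype.val h0
    simp

theorem iInf_ker_comp_eq_bot_of_irreducible {R V M : Type*} [Ring R] [AddCommGroup V] [Module R V]
    [AddCommGroup M] [Module R M] (Γ : Subgroup (V ≃ₗ[R] V))
    (hirr : ∀ W : Submodule R V, (∀ g ∈ Γ, ∀ x ∈ W, g x ∈ W) → W = ⊥ ∨ W = ⊤)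
    {α : V →ₗ[R] M} (hα : α ≠ 0) :
    ⨅ g : Γ, LinearMap.ker (α ∘ₗ (g : V ≃ₗ[R] V).toLinearMap) = ⊥ := by
  refine (hirr _ fun h hh x hx => ?_).resolve_right fun htop => hα ?_
  · simp only [Submodule.mem_iInf, LinearMap.mem_ker, LinearMap.coe_comp, LinearEquiv.coe_coe,
      Function.comp_apply] at hx ⊢
    exact fun g => hx ⟨g * h, Γ.mul_mem g.2 hh⟩
  · ext v
    have hv := (Submodule.mem_iInf _).mp (htop ▸ Submodule.mem_top : v ∈ _) 1
    simpa using hv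

/-- If `Γ ≤ GL(V)` is irreducible on a finite-dimensional real vector
space `V`, `α ∈ V*` is a nonzero functional, and `L` is a `Γ`-invariant additive
subgroup of `V` with `α (L) ⊆ ℤ`, then `L` is a discrete subgroup of `V`. -/
theorem stmt_1 {V : Type*} [NormedAddCommGroup V] [NormedSpace ℝ V]
    [FiniteDimensional ℝ V]
    (Γ : Subgroup (V ≃ₗ[ℝ] V))
    (hirr : ∀ W : Submodule ℝ V, (∀ g ∈ Γ, ∀ x ∈ W, g x ∈ W) → W = ⊥ ∨ W = ⊤)
    (α : V →ₗ[ℝ] ℝ) (hα : α ≠ 0)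
    (L : AddSubgroup V)
    (hinv : ∀ g ∈ Γ, ∀ x ∈ L, g x ∈ L)
    (hint : ∀ x ∈ L, ∃ k : ℤ, α x = (k : ℝ)) :
    DiscreteTopology L := by
  obtain ⟨s, hs⟩ := exists_finset_biInf_eq_iInf
    fun g : Γ => LinearMap.ker (α ∘ₗ (g : V ≃ₗ[ℝ] V).toLinearMap)
  rw [iInf_ker_comp_eq_bot_of_irreducible Γ hirr hα] at hs
  refine L.discreteTopology_of_int_valued
    (fun g : s => (α ∘ₗ (g.1 : V ≃ₗ[ℝ] V).toLinearMap).toAddMonoidHom)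
    (fun g => (α ∘ₗ (g.1 : V ≃ₗ[ℝ] V).toLinearMap).continuous_of_finiteDimensional)
    (fun g x hx => hint _ (hinv _ g.1.2 x hx)) fun x _ hx => ?_
  have hx' : x ∈ ⨅ g ∈ s, LinearMap.ker (α ∘ₗ (g : V ≃ₗ[ℝ] V).toLinearMap) := by
    simpa [Submodule.mem_iInf] using hx
  rwa [hs, Submodule.mem_bot] at hx'
end

section
/- Let m ≥ 2 and let F be a quadratic form on ℚ^m with rational coefficients whose extension F_ℝ to ℝ^m is indefinite, i.e. there exist a, b ∈ ℝ^m with F_ℝ(a) > 0 and F_ℝ(b) < 0. Then there exist a positive rational number d that is not the square of a rational number and vectors a, b ∈ ℚ^m, not both zero, such that the real vector v = a + √d · b is nonzero and F_ℝ(v) = 0. In other words, F acquires a nontrivial isotropic vector over the real quadratic field ℚ(√d) ⊂ ℝ. -/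
/-!
Rational vectors are dense, so `F` takes both signs already on `ℚ^m`: pick `a, b ∈ ℚ^m` with
`F(a) > 0 > F(b)`. On the line `a + t b` the form is `F(a) + 2tB(a,b) + t²F(b)`, a quadratic
polynomial in `t` with rational coefficients and positive discriminant `D = B(a,b)² - F(a)F(b)`,
so it has a root `t ∈ ℚ(√D)`. If `D` is not a rational square take `d = D`; otherwise the root is
rational and any non-square `d`, say `2`, will do. Since `F(a) > 0 > F(b)`, the vectors `a, b`
are independent and `a + t b ≠ 0`.
-/

open Matrix

lemma exists_ratCast_mem_of_isOpen {ι : Type*} {U : Set (ι → ℝ)} (hU : IsOpen U)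
    (hne : U.Nonempty) : ∃ q : ι → ℚ, (fun i => (q i : ℝ)) ∈ U :=
  (DenseRange.piMap fun _ => Rat.denseRange_cast).exists_mem_open hU hne

lemma not_exists_rat_sq_eq_two : ¬∃ q : ℚ, q ^ 2 = 2 := by
  rintro ⟨q, hq⟩
  have : Irrational √((2 : ℚ) : ℝ) := by simpa using irrational_sqrt_two
  exact (irrational_sqrt_ratCast_iff_of_nonneg zero_le_two).mp this ⟨q, by rw [← hq, sq]⟩

lemma quadratic_eq_zero_of_sq_eq_discrim {K : Type*} [Field K] {α β γ δ : K} (hγ : γ ≠ 0)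
    (hδ : δ ^ 2 = β ^ 2 - α * γ) :
    α + 2 * ((-β + δ) / γ) * β + ((-β + δ) / γ) ^ 2 * γ = 0 := by
  field_simp
  linear_combination hδ

lemma exists_nonsquare_quadratic_root (α β γ : ℚ) (hγ : γ ≠ 0) (hD : 0 < β ^ 2 - α * γ) :
    ∃ d : ℚ, 0 < d ∧ (¬∃ q : ℚ, q ^ 2 = d) ∧ ∃ r s : ℚ,
      (α : ℝ) + 2 * (r + √d * s) * β + (r + √d * s) ^ 2 * γ = 0 := by
  by_cases hsq : ∃ q : ℚ, q ^ 2 = β ^ 2 - α * γ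
  · obtain ⟨q, hq⟩ := hsq
    refine ⟨2, two_pos, not_exists_rat_sq_eq_two, (-β + q) / γ, 0, ?_⟩
    rw [Rat.cast_zero, mul_zero, add_zero]
    exact_mod_cast quadratic_eq_zero_of_sq_eq_discrim hγ hq
  · refine ⟨_, hD, hsq, -β / γ, 1 / γ, ?_⟩
    have hδ : √((β ^ 2 - α * γ : ℚ) : ℝ) ^ 2 = (β : ℝ) ^ 2 - α * γ := by
      rw [Real.sq_sqrt (by exact_mod_cast hD.le)]
      push_cast
      ring
    have ht : ((-β / γ : ℚ) : ℝ) + √((β ^ 2 - α * γ : ℚ) : ℝ) * ((1 / γ : ℚ) : ℝ)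
        = (-β + √((β ^ 2 - α * γ : ℚ) : ℝ)) / γ := by
      push_cast
      ring
    rw [ht]
    exact quadratic_eq_zero_of_sq_eq_discrim (by exact_mod_cast hγ) hδ

section QuadraticForm

variable {n : Type*} [Fintype n]

lemma Rat.cast_dotProduct_mulVec {K : Type*} [Field K] [CharZero K] (M : Matrix n n ℚ)
    (x y : n → ℚ) :
    ((x ⬝ᵥ M *ᵥ y : ℚ) : K) = (fun i => (x i : K)) ⬝ᵥ M.map (↑) *ᵥ fun i => (y i : K) := by
  rw [← eq_ratCast (Rat.castHom K), RingHom.map_dotProduct]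
  congr 1
  funext i
  exact RingHom.map_mulVec (Rat.castHom K) M y i

lemma dotProduct_mulVec_add_smul_self {R : Type*} [CommRing R] {A : Matrix n n R} (hA : Aᵀ = A)
    (x y : n → R) (t : R) :
    (x + t • y) ⬝ᵥ A *ᵥ (x + t • y)
      = x ⬝ᵥ A *ᵥ x + 2 * t * (x ⬝ᵥ A *ᵥ y) + t ^ 2 * (y ⬝ᵥ A *ᵥ y) := by
  have hsymm : y ⬝ᵥ A *ᵥ x = x ⬝ᵥ A *ᵥ y := by rw [← dotProduct_transpose_mulVec, hA]
  simp only [mulVec_add, mulVec_smul, add_dotProduct, dotProduct_add, smul_dotProduct,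
    dotProduct_smul, smul_eq_mul, hsymm]
  ring

lemma add_smul_ne_zero_of_dotProduct_mulVec_pos_of_neg {K : Type*} [CommRing K] [LinearOrder K]
    [IsStrictOrderedRing K] {A : Matrix n n K} {x y : n → K} (hx : 0 < x ⬝ᵥ A *ᵥ x)
    (hy : y ⬝ᵥ A *ᵥ y < 0) (t : K) : x + t • y ≠ 0 := by
  intro h
  rw [eq_neg_of_add_eq_zero_left h] at hx
  simp only [mulVec_neg, mulVec_smul, neg_dotProduct, dotProduct_neg, smul_dotProduct,
    dotProduct_smul, smul_eq_mul] at hx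
  nlinarith [mul_self_nonneg t]

end QuadraticForm

theorem stmt_11_general (m : ℕ)
    (M : Matrix (Fin m) (Fin m) ℚ) (hsymm : M.transpose = M)
    (a₀ b₀ : Fin m → ℝ)
    (hpos : 0 < dotProduct a₀ ((M.map ((↑) : ℚ → ℝ)).mulVec a₀))
    (hneg : dotProduct b₀ ((M.map ((↑) : ℚ → ℝ)).mulVec b₀) < 0) :
    ∃ d : ℚ, 0 < d ∧ (¬ ∃ q : ℚ, q ^ 2 = d) ∧
      ∃ a b : Fin m → ℚ, ¬(a = 0 ∧ b = 0) ∧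
        (fun i => (a i : ℝ) + Real.sqrt (d : ℝ) * (b i : ℝ)) ≠ 0 ∧
        dotProduct (fun i => (a i : ℝ) + Real.sqrt (d : ℝ) * (b i : ℝ))
          ((M.map ((↑) : ℚ → ℝ)).mulVec
            (fun i => (a i : ℝ) + Real.sqrt (d : ℝ) * (b i : ℝ))) = 0 := by
  have hF : Continuous fun x : Fin m → ℝ => x ⬝ᵥ M.map (↑) *ᵥ x :=
    continuous_id.dotProduct (continuous_const.matrix_mulVec continuous_id)
  obtain ⟨a, ha⟩ := exists_ratCast_mem_of_isOpen (hF.isOpen_preimage _ isOpen_Ioi) ⟨a₀, hpos⟩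
  obtain ⟨b, hb⟩ := exists_ratCast_mem_of_isOpen (hF.isOpen_preimage _ isOpen_Iio) ⟨b₀, hneg⟩
  have hFa : 0 < a ⬝ᵥ M *ᵥ a := by
    rw [← Rat.cast_pos (K := ℝ), Rat.cast_dotProduct_mulVec]
    exact ha
  have hFb : b ⬝ᵥ M *ᵥ b < 0 := by
    rw [← Rat.cast_lt_zero (K := ℝ), Rat.cast_dotProduct_mulVec]
    exact hb
  obtain ⟨d, hd, hd_sq, r, s, hroot⟩ := exists_nonsquare_quadratic_root
    (a ⬝ᵥ M *ᵥ a) (a ⬝ᵥ M *ᵥ b) _ hFb.ne (by nlinarith [sq_nonneg (a ⬝ᵥ M *ᵥ b)])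
  refine ⟨d, hd, hd_sq, a + r • b, s • b, ?_⟩
  have hv : (fun i => ((a + r • b) i : ℝ) + √d * ((s • b) i : ℝ))
      = (fun i => (a i : ℝ)) + ((r : ℝ) + √d * s) • fun i => (b i : ℝ) := by
    funext i
    simp only [Pi.add_apply, Pi.smul_apply, smul_eq_mul, Rat.cast_add, Rat.cast_mul]
    ring
  have hv_ne := hv ▸ add_smul_ne_zero_of_dotProduct_mulVec_pos_of_neg ha hb _
  refine ⟨fun h => hv_ne (by rw [h.1, h.2]; funext; simp), hv_ne, ?_⟩
  rw [hv, dotProduct_mulVec_add_smul_self (by rw [← transpose_map, hsymm]),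
    ← Rat.cast_dotProduct_mulVec, ← Rat.cast_dotProduct_mulVec, ← Rat.cast_dotProduct_mulVec]
  exact hroot

/-- An indefinite rational quadratic form `F(x) = xᵀ M x` on `ℚ^m`
(`m ≥ 2`, `M` symmetric) acquires a nontrivial isotropic vector over a real quadratic
field `ℚ(√d)`: there are a positive non-square rational `d` and rational vectors `a, b`,
not both zero, such that `v = a + √d · b` is a nonzero real vector with `F_ℝ(v) = 0`. -/
theorem stmt_11 (m : ℕ) (hm : 2 ≤ m)
    (M : Matrix (Fin m) (Fin m) ℚ) (hsymm : M.transpose = M)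
    (a₀ b₀ : Fin m → ℝ)
    (hpos : 0 < dotProduct a₀ ((M.map ((↑) : ℚ → ℝ)).mulVec a₀))
    (hneg : dotProduct b₀ ((M.map ((↑) : ℚ → ℝ)).mulVec b₀) < 0) :
    ∃ d : ℚ, 0 < d ∧ (¬ ∃ q : ℚ, q ^ 2 = d) ∧
      ∃ a b : Fin m → ℚ, ¬(a = 0 ∧ b = 0) ∧
        (fun i => (a i : ℝ) + Real.sqrt (d : ℝ) * (b i : ℝ)) ≠ 0 ∧
        dotProduct (fun i => (a i : ℝ) + Real.sqrt (d : ℝ) * (b i : ℝ))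
          ((M.map ((↑) : ℚ → ℝ)).mulVec
            (fun i => (a i : ℝ) + Real.sqrt (d : ℝ) * (b i : ℝ))) = 0 :=
  stmt_11_general m M hsymm a₀ b₀ hpos hneg
end
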